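/- Let 1 ≤ p < ∞, a ∈ ℝ^d, r > 0, and let γ : ℝ^{d-1} → ℝ be Lipschitz with D ∩ B(a,r) = {x ∈ B(a,r) : x_d > γ(x')} for an open set D ⊆ ℝ^d. Then there exists a constant C (depending on d, p, r, and the Lipschitz constant of γ) such that for every u ∈ C¹(D̄), ∫_{∂D ∩ B(a,r/2)} |u|^p dH^{d-1} ≤ C ∫_{D ∩ B(a,r)} (|u|^p + |Du|^p) dx. -/

import Mathlib

open MeasureTheory Metric Set
open scoped ENNReal NNReal

noncomputable section

namespace LocalTraceAux

theorem add_rpow_le_two_rpow_mul (a b : ℝ≥0∞) {p : ℝ} (hp : 0 ≤ p) :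
    (a + b) ^ p ≤ 2 ^ p * (a ^ p + b ^ p) := by
  have h1 : a + b ≤ 2 * max a b := by
    rw [two_mul]; exact add_le_add (le_max_left a b) (le_max_right a b)
  calc (a + b) ^ p ≤ (2 * max a b) ^ p := ENNReal.rpow_le_rpow h1 hp
    _ = 2 ^ p * (max a b) ^ p := ENNReal.mul_rpow_of_nonneg _ _ hp
    _ ≤ 2 ^ p * (a ^ p + b ^ p) := by
        gcongr
        rcases max_cases a b with ⟨h, -⟩ | ⟨h, -⟩ <;> rw [h]
        · exact self_le_add_right _ _
        · exact self_le_add_left _ _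

def shearEquiv {α : Type*} [MeasurableSpace α] (f : α → ℝ) (hf : Measurable f) :
    (α × ℝ) ≃ᵐ (α × ℝ) where
  toFun p := (p.1, p.2 + f p.1)
  invFun p := (p.1, p.2 - f p.1)
  left_inv p := by simp
  right_inv p := by simp
  measurable_toFun := measurable_fst.prodMk (measurable_snd.add (hf.comp measurable_fst))
  measurable_invFun := measurable_fst.prodMk (measurable_snd.sub (hf.comp measurable_fst))

theorem shearEquiv_measurePreserving {α : Type*} [MeasurableSpace α] (μ : Measure α)
    [SigmaFinite μ] (f : α → ℝ) (hf : Measurable f) :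
    MeasurePreserving (shearEquiv f hf) (μ.prod volume) (μ.prod volume) :=
  (MeasurePreserving.id μ).skew_product (g := fun x y => y + f x)
    (measurable_snd.add (hf.comp measurable_fst))
    (ae_of_all _ fun x => map_add_right_eq_self volume (f x))

variable {d : ℕ} (γ : EuclideanSpace ℝ (Fin d) → ℝ) (hγm : Measurable γ)

def Phi : (EuclideanSpace ℝ (Fin d) × ℝ) ≃ᵐ EuclideanSpace ℝ (Fin (d + 1)) :=
  (shearEquiv γ hγm).trans <|
    MeasurableEquiv.prodComm.trans <|
      ((MeasurableEquiv.refl ℝ).prodCongr ((MeasurableEquiv.toLp 2 (Fin d → ℝ)).symm)).trans <|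
        ((MeasurableEquiv.piFinSuccAbove (fun _ : Fin (d + 1) => ℝ) (Fin.last d)).symm.trans
          ((MeasurableEquiv.toLp 2 (Fin (d + 1) → ℝ)).symm).symm)

theorem Phi_eq (x' : EuclideanSpace ℝ (Fin d)) (t : ℝ) :
    Phi γ hγm (x', t)
      = (WithLp.equiv 2 (Fin (d + 1) → ℝ)).symm
          (Fin.insertNth (Fin.last d) (t + γ x') (fun i => x' i)) := rfl

theorem Phi_apply_last (x' : EuclideanSpace ℝ (Fin d)) (t : ℝ) :
    Phi γ hγm (x', t) (Fin.last d) = t + γ x' := by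
  rw [Phi_eq, WithLp.equiv_symm_apply, PiLp.toLp_apply]
  exact Fin.insertNth_apply_same _ _ _

theorem Phi_apply_castSucc (x' : EuclideanSpace ℝ (Fin d)) (t : ℝ) (j : Fin d) :
    Phi γ hγm (x', t) (Fin.castSucc j) = x' j := by
  rw [Phi_eq, ← Fin.succAbove_last, WithLp.equiv_symm_apply, PiLp.toLp_apply]
  exact Fin.insertNth_apply_succAbove _ _ _ _

theorem measurePreserving_Phi :
    MeasurePreserving (Phi γ hγm)
      ((volume : Measure (EuclideanSpace ℝ (Fin d))).prod (volume : Measure ℝ))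
      (volume : Measure (EuclideanSpace ℝ (Fin (d + 1)))) := by
  have h1 := shearEquiv_measurePreserving (volume : Measure (EuclideanSpace ℝ (Fin d))) γ hγm
  have h2 : MeasurePreserving (Prod.swap)
      ((volume : Measure (EuclideanSpace ℝ (Fin d))).prod (volume : Measure ℝ))
      ((volume : Measure ℝ).prod (volume : Measure (EuclideanSpace ℝ (Fin d)))) :=
    Measure.measurePreserving_swap
  have h3 : MeasurePreserving (Prod.map (id : ℝ → ℝ) ((MeasurableEquiv.toLp 2 (Fin d → ℝ)).symm))
      ((volume : Measure ℝ).prod (volume : Measure (EuclideanSpace ℝ (Fin d))))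
      ((volume : Measure ℝ).prod (volume : Measure (Fin d → ℝ))) :=
    (MeasurePreserving.id volume).prod (EuclideanSpace.volume_preserving_symm_measurableEquiv_toLp (Fin d))
  have h4 : MeasurePreserving
      (MeasurableEquiv.piFinSuccAbove (fun _ : Fin (d + 1) => ℝ) (Fin.last d)).symm
      ((volume : Measure ℝ).prod (volume : Measure (Fin d → ℝ)))
      (volume : Measure (Fin (d + 1) → ℝ)) := by
    have h := (volume_preserving_piFinSuccAbove (fun _ : Fin (d + 1) => ℝ) (Fin.last d)).symm
      (MeasurableEquiv.piFinSuccAbove (fun _ : Fin (d + 1) => ℝ) (Fin.last d))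
    rwa [Measure.volume_eq_prod] at h
  have h5 := (EuclideanSpace.volume_preserving_symm_measurableEquiv_toLp (Fin (d + 1))).symm
    ((MeasurableEquiv.toLp 2 (Fin (d + 1) → ℝ)).symm)
  exact h5.comp (h4.comp (h3.comp (h2.comp h1)))

end LocalTraceAux

open LocalTraceAux

/-- **local trace estimate.** Let `1 ≤ p < ∞`, `a ∈ ℝ^{d+1}`, `r > 0`, and let
`γ : ℝ^d → ℝ` be Lipschitz such that `D ∩ B(a,r) = {x ∈ B(a,r) : x_d > γ(x')}` for an open
set `D`.  Then there is a constant `C` (depending on everything but `u`) such that for all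
`u ∈ C¹(D̄)`,
`∫_{∂D ∩ B(a,r/2)} |u|^p dH^d ≤ C ∫_{D ∩ B(a,r)} (|u|^p + |Du|^p) dx`. -/
theorem local_trace_estimate (d : ℕ) (p : ℝ) (hp : 1 ≤ p)
    (a : EuclideanSpace ℝ (Fin (d + 1))) (r : ℝ) (hr : 0 < r)
    (γ : EuclideanSpace ℝ (Fin d) → ℝ) (K : NNReal) (hγ : LipschitzWith K γ)
    (D : Set (EuclideanSpace ℝ (Fin (d + 1)))) (hD : IsOpen D)
    (hDloc : D ∩ ball a r = {x ∈ ball a r | γ (WithLp.toLp 2 (Fin.init x)) < x (Fin.last d)}) :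
    ∃ C : ℝ≥0∞, C < ∞ ∧
      ∀ u : EuclideanSpace ℝ (Fin (d + 1)) → ℝ, ContDiffOn ℝ 1 u (closure D) →
        ∫⁻ x in frontier D ∩ ball a (r / 2), ENNReal.ofReal (|u x| ^ p)
            ∂(μH[(d : ℝ)] : Measure (EuclideanSpace ℝ (Fin (d + 1)))) ≤
          C * ∫⁻ x in D ∩ ball a r,
            ENNReal.ofReal (|u x| ^ p + ‖fderivWithin ℝ u D x‖ ^ p) := by
  classical
  have hγm : Measurable γ := hγ.continuous.measurable
  have hp0 : (0 : ℝ) ≤ p := le_trans zero_le_one hp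
  set T : ℝ := r / 2 with hT_def
  have hT : 0 < T := by positivity
  set Φ := LocalTraceAux.Phi γ hγm with hΦ_def
  set ed : EuclideanSpace ℝ (Fin (d + 1)) := EuclideanSpace.single (Fin.last d) (1 : ℝ) with hed
  have hed_norm : ‖ed‖ = 1 := by rw [hed, EuclideanSpace.norm_single]; norm_num
  have hlast : ∀ (x' : EuclideanSpace ℝ (Fin d)) (t : ℝ), Φ (x', t) (Fin.last d) = t + γ x' := by
    intro x' t; rw [hΦ_def]; exact Phi_apply_last γ hγm x' t
  have hcast : ∀ (x' : EuclideanSpace ℝ (Fin d)) (t : ℝ) (j : Fin d),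
      Φ (x', t) (Fin.castSucc j) = x' j := by
    intro x' t j; rw [hΦ_def]; exact Phi_apply_castSucc γ hγm x' t j
  have hΦ_affine : ∀ (x' : EuclideanSpace ℝ (Fin d)) (t : ℝ),
      Φ (x', t) = Φ (x', 0) + t • ed := by
    intro x' t
    ext i
    induction i using Fin.lastCases with
    | last =>
        rw [hlast]
        rw [show (Φ (x', 0) + t • ed) (Fin.last d) = Φ (x', 0) (Fin.last d) + t • ed (Fin.last d)
          from rfl]
        rw [hlast, hed, EuclideanSpace.single_apply]
        simp; ring
    | cast j =>
        rw [hcast]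
        rw [show (Φ (x', 0) + t • ed) (Fin.castSucc j)
            = Φ (x', 0) (Fin.castSucc j) + t • ed (Fin.castSucc j) from rfl]
        rw [hcast, hed, EuclideanSpace.single_apply]
        simp [(Fin.castSucc_lt_last j).ne]
  have hΦ_dist : ∀ (x' : EuclideanSpace ℝ (Fin d)) (t s : ℝ),
      dist (Φ (x', t)) (Φ (x', s)) = |t - s| := by
    intro x' t s
    rw [hΦ_affine x' t, hΦ_affine x' s, dist_eq_norm, add_sub_add_left_eq_sub, ← sub_smul,
      norm_smul, hed_norm, mul_one, Real.norm_eq_abs]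
  have hΦ_cont : Continuous fun q : EuclideanSpace ℝ (Fin d) × ℝ => Φ q := by
    have h1 : Continuous fun q : EuclideanSpace ℝ (Fin d) × ℝ =>
        (Fin.insertNth (Fin.last d) (q.2 + γ q.1) (fun i => q.1 i) : Fin (d + 1) → ℝ) := by
      apply continuous_pi
      intro i
      induction i using Fin.lastCases with
      | last =>
          simp only [Fin.insertNth_apply_same]
          exact continuous_snd.add (hγ.continuous.comp continuous_fst)
      | cast j =>
          simp only [← Fin.succAbove_last, Fin.insertNth_apply_succAbove]
          exact (continuous_apply j).comp
            ((PiLp.continuous_ofLp 2 fun _ : Fin d => ℝ).comp continuous_fst)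
    have h2 := (PiLp.continuous_toLp 2 fun _ : Fin (d + 1) => ℝ).comp h1
    exact h2.congr fun q => by rw [hΦ_def]; exact (Phi_eq γ hγm q.1 q.2).symm
  have hΦ_mp : MeasurePreserving Φ
      ((volume : Measure (EuclideanSpace ℝ (Fin d))).prod (volume : Measure ℝ))
      (volume : Measure (EuclideanSpace ℝ (Fin (d + 1)))) := by
    rw [hΦ_def]; exact measurePreserving_Phi γ hγm
  -- the half-ball set `A` and its pi-type counterpart `B`
  set A : Set (EuclideanSpace ℝ (Fin d)) := (fun x' => Φ (x', 0)) ⁻¹' ball a (r / 2) with hA_def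
  have hA_open : IsOpen A :=
    isOpen_ball.preimage (hΦ_cont.comp (continuous_id.prodMk continuous_const))
  set B : Set (Fin d → ℝ) :=
    ⇑((MeasurableEquiv.toLp 2 (Fin d → ℝ)).symm).symm ⁻¹' A with hB_def
  set G : (Fin d → ℝ) → EuclideanSpace ℝ (Fin (d + 1)) :=
    fun z => Φ (((MeasurableEquiv.toLp 2 (Fin d → ℝ)).symm).symm z, 0) with hG_def
  -- membership of the vertical segments in `D ∩ ball a r`
  have hin : ∀ x' ∈ A, ∀ t ∈ Ioc (0 : ℝ) T, Φ (x', t) ∈ D ∩ ball a r := by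
    intro x' hx' t ht
    have hb : Φ (x', t) ∈ ball a r := by
      have h1 : dist (Φ (x', t)) (Φ (x', 0)) = |t| := by simpa using hΦ_dist x' t 0
      have h2 : dist (Φ (x', 0)) a < r / 2 := hx'
      have h3 : |t| ≤ T := by rw [abs_of_pos ht.1]; exact ht.2
      have := lt_of_le_of_lt (dist_triangle (Φ (x', t)) (Φ (x', 0)) a)
        (by rw [h1]; exact add_lt_add_of_le_of_lt h3 h2)
      rw [mem_ball]
      calc dist (Φ (x', t)) a < T + r / 2 := this
        _ = r := by rw [hT_def]; ring
    have hlt : γ (WithLp.toLp 2 (Fin.init (Φ (x', t)))) < Φ (x', t) (Fin.last d) := by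
      have hinit : (WithLp.toLp 2 (Fin.init (Φ (x', t))) : EuclideanSpace ℝ (Fin d)) = x' := by
        ext j
        exact hcast x' t j
      rw [hinit, hlast]
      exact lt_add_of_pos_left _ ht.1
    have : Φ (x', t) ∈ {x ∈ ball a r | γ (WithLp.toLp 2 (Fin.init x)) < x (Fin.last d)} := ⟨hb, hlt⟩
    rw [hDloc]
    exact this
  have hcl : ∀ x' ∈ A, Φ (x', 0) ∈ closure D := by
    intro x' hx'
    have htd : Filter.Tendsto (fun t : ℝ => Φ (x', t)) (nhdsWithin 0 (Ioi 0)) (nhds (Φ (x', 0))) :=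
      (((hΦ_cont.comp (continuous_const.prodMk continuous_id)).tendsto 0).mono_left
        nhdsWithin_le_nhds)
    refine mem_closure_of_tendsto htd ?_
    filter_upwards [Ioo_mem_nhdsGT hT] with t htt
      using (hin x' hx' t ⟨htt.1, htt.2.le⟩).1
  -- Lipschitz property of `G`
  obtain ⟨cG, hcG⟩ : ∃ c : ℝ≥0, LipschitzWith c G := by
    set K' : ℝ≥0 := K * (Fintype.card (Fin d) : ℝ≥0) ^ ((1 : ℝ≥0∞) / 2).toReal with hK'
    have hK'γ : LipschitzWith K'
        (fun z : Fin d → ℝ => γ (((MeasurableEquiv.toLp 2 (Fin d → ℝ)).symm).symm z)) :=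
      hγ.comp ((PiLp.antilipschitzWith_ofLp 2 fun _ : Fin d => ℝ).to_rightInverse fun z => rfl)
    have hH : LipschitzWith (max 1 K') (fun z : Fin d → ℝ =>
        (Fin.insertNth (Fin.last d) (γ (((MeasurableEquiv.toLp 2 (Fin d → ℝ)).symm).symm z)) z :
          Fin (d + 1) → ℝ)) := by
      apply LipschitzWith.of_dist_le_mul
      intro z w
      rw [dist_pi_le_iff (mul_nonneg (by positivity) dist_nonneg)]
      intro i
      induction i using Fin.lastCases with
      | last =>
          simp only [Fin.insertNth_apply_same]
          calc dist (γ _) (γ _) ≤ (K' : ℝ) * dist z w := hK'γ.dist_le_mul z w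
            _ ≤ (max 1 K' : ℝ≥0) * dist z w := by
                gcongr
                exact_mod_cast le_max_right 1 K'
      | cast j =>
          simp only [← Fin.succAbove_last, Fin.insertNth_apply_succAbove]
          calc dist (z j) (w j) ≤ dist z w := dist_le_pi_dist z w j
            _ = 1 * dist z w := (one_mul _).symm
            _ ≤ (max 1 K' : ℝ≥0) * dist z w := by
                gcongr
                exact_mod_cast le_max_left 1 K'
    have hsymm : LipschitzWith ((Fintype.card (Fin (d + 1)) : ℝ≥0) ^ ((1 : ℝ≥0∞) / 2).toReal)
        ((WithLp.equiv 2 (Fin (d + 1) → ℝ)).symm) :=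
      (PiLp.antilipschitzWith_ofLp 2 fun _ : Fin (d + 1) => ℝ).to_rightInverse fun z => rfl
    refine ⟨(Fintype.card (Fin (d + 1)) : ℝ≥0) ^ ((1 : ℝ≥0∞) / 2).toReal * (1 ⊔ K'), ?_⟩
    have hcomp := hsymm.comp hH
    have hGH : G = ((WithLp.equiv 2 (Fin (d + 1) → ℝ)).symm) ∘ (fun z : Fin d → ℝ =>
        (Fin.insertNth (Fin.last d) (γ (((MeasurableEquiv.toLp 2 (Fin d → ℝ)).symm).symm z)) z :
          Fin (d + 1) → ℝ)) := by
      funext z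
      simp only [hG_def, hΦ_def]
      rw [Phi_eq]
      simp only [Function.comp_apply]
      congr 1
      funext i
      induction i using Fin.lastCases with
      | last => simp [Fin.insertNth_apply_same]
      | cast j =>
          simp only [← Fin.succAbove_last, Fin.insertNth_apply_succAbove]
          rfl
    rw [hGH]
    exact hcomp
  have hGm : Measurable G := hcG.continuous.measurable
  -- the boundary piece is contained in the graph over `B`
  have hrr : r / 2 < r := by linarith
  have hS_sub : frontier D ∩ ball a (r / 2) ⊆ G '' B := by
    rintro x ⟨hxf, hxb⟩
    have hxb' : x ∈ ball a r := ball_subset_ball hrr.le hxb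
    have h1 : ¬ γ (WithLp.toLp 2 (Fin.init x)) < x (Fin.last d) := by
      intro hlt
      have hxD : x ∈ D ∩ ball a r := by rw [hDloc]; exact ⟨hxb', hlt⟩
      have : x ∉ D := by
        have := hD.frontier_eq ▸ hxf
        exact this.2
      exact this hxD.1
    have h2 : γ (WithLp.toLp 2 (Fin.init x)) ≤ x (Fin.last d) := by
      have hxcl : x ∈ closure D := frontier_subset_closure hxf
      have hx2 : x ∈ closure (D ∩ ball a r) := by
        have h : x ∈ closure (ball a r ∩ D) := isOpen_ball.inter_closure ⟨hxb', hxcl⟩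
        rwa [inter_comm (ball a r) D] at h
      have hsub : closure (D ∩ ball a r) ⊆
          {y : EuclideanSpace ℝ (Fin (d + 1)) |
            γ ((WithLp.equiv 2 (Fin d → ℝ)).symm fun j => y (Fin.castSucc j))
              ≤ y (Fin.last d)} := by
        apply closure_minimal
        · rw [hDloc]
          rintro y ⟨-, hy⟩
          exact le_of_lt hy
        · apply isClosed_le
          · apply hγ.continuous.comp
            apply (PiLp.continuous_toLp 2 fun _ : Fin d => ℝ).comp
            exact continuous_pi fun j => (continuous_apply (Fin.castSucc j)).comp
              (PiLp.continuous_ofLp 2 fun _ : Fin (d + 1) => ℝ)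
          · exact (continuous_apply (Fin.last d)).comp
              (PiLp.continuous_ofLp 2 fun _ : Fin (d + 1) => ℝ)
      exact hsub hx2
    have heq : x (Fin.last d) = γ (WithLp.toLp 2 (Fin.init x)) := le_antisymm (not_lt.1 h1) h2
    refine ⟨(fun j => x (Fin.castSucc j) : Fin d → ℝ), ?_, ?_⟩
    · show G _ ∈ ball a (r / 2)
      have hGx : G (fun j => x (Fin.castSucc j)) = x := by
        ext i
        induction i using Fin.lastCases with
        | last =>
            show Φ (_, 0) (Fin.last d) = _
            rw [hlast, zero_add, heq]
            rfl
        | cast j =>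
            show Φ (_, 0) (Fin.castSucc j) = _
            rw [hcast]
            rfl
      rw [hGx]
      exact hxb
    · ext i
      induction i using Fin.lastCases with
      | last =>
          show Φ (_, 0) (Fin.last d) = _
          rw [hlast, zero_add, heq]
          rfl
      | cast j =>
          show Φ (_, 0) (Fin.castSucc j) = _
          rw [hcast]
          rfl
  -- Hausdorff measure comparison on the graph
  have hHd : (μH[(d : ℝ)] : Measure (Fin d → ℝ)) = volume := by
    simpa using MeasureTheory.hausdorffMeasure_pi_real (ι := Fin d)
  have hmeas_comp : (μH[(d : ℝ)] : Measure (EuclideanSpace ℝ (Fin (d + 1)))).restrict (G '' B)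
      ≤ ((cG : ℝ≥0∞) ^ (d : ℝ)) • ((volume.restrict B).map G) := by
    refine Measure.le_iff.2 fun E hE => ?_
    rw [Measure.restrict_apply hE, Measure.smul_apply, Measure.map_apply hGm hE,
      Measure.restrict_apply (hGm hE), smul_eq_mul]
    calc μH[(d : ℝ)] (E ∩ G '' B) ≤ μH[(d : ℝ)] (G '' (G ⁻¹' E ∩ B)) := by
          apply measure_mono
          rintro x ⟨hxE, z, hzB, rfl⟩
          exact ⟨z, ⟨hxE, hzB⟩, rfl⟩
      _ ≤ (cG : ℝ≥0∞) ^ (d : ℝ) * μH[(d : ℝ)] (G ⁻¹' E ∩ B) :=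
          hcG.hausdorffMeasure_image_le (by positivity) _
      _ = (cG : ℝ≥0∞) ^ (d : ℝ) * volume (G ⁻¹' E ∩ B) := by rw [hHd]
  -- the constant
  set c1 : ℝ≥0∞ := (ENNReal.ofReal T)⁻¹ * (2 ^ p * (1 + ENNReal.ofReal T ^ p)) with hc1_def
  have hTne0 : ENNReal.ofReal T ≠ 0 := (ENNReal.ofReal_pos.2 hT).ne'
  have h2top : (2 : ℝ≥0∞) ^ p ≠ ⊤ := by
    exact (ENNReal.rpow_lt_top_of_nonneg hp0 (by norm_num)).ne
  have hc1_ne_top : c1 ≠ ⊤ := by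
    rw [hc1_def]
    apply ENNReal.mul_ne_top
    · exact (ENNReal.inv_lt_top.2 (ENNReal.ofReal_pos.2 hT)).ne
    · exact ENNReal.mul_ne_top h2top
        (ENNReal.add_ne_top.2 ⟨by norm_num, (ENNReal.rpow_lt_top_of_nonneg hp0
          ENNReal.ofReal_ne_top).ne⟩)
  refine ⟨(cG : ℝ≥0∞) ^ (d : ℝ) * c1, ?_, ?_⟩
  · apply ENNReal.mul_lt_top
    · exact ENNReal.rpow_lt_top_of_nonneg (by positivity) ENNReal.coe_ne_top
    · exact lt_top_iff_ne_top.2 hc1_ne_top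
  intro u hu
  -- notation
  set F : EuclideanSpace ℝ (Fin (d + 1)) → ℝ≥0∞ :=
    fun x => ENNReal.ofReal (|u x| ^ p + ‖fderivWithin ℝ u D x‖ ^ p) with hF_def
  -- continuity facts about u on D
  have huc : ContinuousOn u (closure D) := hu.continuousOn
  have hucD : ContinuousOn u D := huc.mono subset_closure
  have hfderiv_cont : ContinuousOn (fderiv ℝ u) D :=
    (hu.mono subset_closure).continuousOn_fderiv_of_isOpen hD le_rfl
  have hfderivW_cont : ContinuousOn (fun x => fderivWithin ℝ u D x) D :=
    hfderiv_cont.congr fun x hx => fderivWithin_of_isOpen hD hx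
  have hF_cont : ContinuousOn F D := by
    apply ENNReal.continuous_ofReal.comp_continuousOn
    apply ContinuousOn.add
    · exact hucD.abs.rpow_const fun x hx => Or.inr hp0
    · exact hfderivW_cont.norm.rpow_const fun x hx => Or.inr hp0
  -- THE CORE ESTIMATE
  have core : ∀ x' ∈ A, ENNReal.ofReal (|u (Φ (x', 0))| ^ p)
      ≤ c1 * ∫⁻ t in Ioc (0 : ℝ) T, F (Φ (x', t)) := by
    intro x' hx'
    have hyD : ∀ t ∈ Ioc (0 : ℝ) T, Φ (x', t) ∈ D := fun t ht => (hin x' hx' t ht).1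
    have hy_cont : Continuous fun t : ℝ => Φ (x', t) :=
      hΦ_cont.comp (continuous_const.prodMk continuous_id)
    have hy_cl : Φ (x', 0) ∈ closure D := hcl x' hx'
    have hyderiv : ∀ s : ℝ, HasDerivAt (fun t : ℝ => Φ (x', t)) ed s := by
      have hyfun : (fun t : ℝ => Φ (x', t)) = fun t : ℝ => Φ (x', 0) + t • ed :=
        funext fun t => hΦ_affine x' t
      rw [hyfun]
      intro s
      simpa using ((hasDerivAt_id s).smul_const ed).const_add (Φ (x', 0))
    have hDu : ∀ s ∈ Ioc (0 : ℝ) T,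
        HasDerivAt (fun t : ℝ => u (Φ (x', t))) ((fderiv ℝ u (Φ (x', s))) ed) s := by
      intro s hs
      have hdu : DifferentiableAt ℝ u (Φ (x', s)) :=
        (hu.differentiableOn one_ne_zero).differentiableAt
          (Filter.mem_of_superset (hD.mem_nhds (hyD s hs)) subset_closure)
      exact hdu.hasFDerivAt.comp_hasDerivAt s (hyderiv s)
    have hfc : ContinuousOn (fun s : ℝ => fderiv ℝ u (Φ (x', s))) (Ioc 0 T) :=
      hfderiv_cont.comp hy_cont.continuousOn hyD
    have hg'c : ContinuousOn (fun s : ℝ => (fderiv ℝ u (Φ (x', s))) ed) (Ioc 0 T) :=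
      hfc.clm_apply continuousOn_const
    have hnc : ContinuousOn (fun s : ℝ => ‖fderivWithin ℝ u D (Φ (x', s))‖) (Ioc 0 T) :=
      (hfderivW_cont.comp hy_cont.continuousOn hyD).norm
    set L : ℝ≥0∞ := ∫⁻ s in Ioc (0 : ℝ) T, ENNReal.ofReal ‖fderivWithin ℝ u D (Φ (x', s))‖
      with hL_def
    have key : ∀ t ∈ Ioc (0 : ℝ) T,
        ENNReal.ofReal |u (Φ (x', 0))| ≤ ENNReal.ofReal |u (Φ (x', t))| + L := by
      intro t ht
      have hstep : ∀ ε ∈ Ioo (0 : ℝ) t,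
          ENNReal.ofReal |u (Φ (x', 0))| ≤ ENNReal.ofReal |u (Φ (x', t))|
            + ENNReal.ofReal |u (Φ (x', ε)) - u (Φ (x', 0))| + L := by
        intro ε hε
        have hεt : ε ≤ t := hε.2.le
        have hIcc : Icc ε t ⊆ Ioc (0 : ℝ) T := fun s hs =>
          ⟨lt_of_lt_of_le hε.1 hs.1, le_trans hs.2 ht.2⟩
        have huIcc : uIcc ε t = Icc ε t := uIcc_of_le hεt
        have hder : ∀ s ∈ uIcc ε t,
            HasDerivAt (fun τ : ℝ => u (Φ (x', τ))) ((fderiv ℝ u (Φ (x', s))) ed) s := by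
          rw [huIcc]; exact fun s hs => hDu s (hIcc hs)
        have hint : IntervalIntegrable (fun s : ℝ => (fderiv ℝ u (Φ (x', s))) ed) volume ε t := by
          apply ContinuousOn.intervalIntegrable
          rw [huIcc]; exact hg'c.mono hIcc
        have hint2 : IntervalIntegrable (fun s : ℝ => ‖fderivWithin ℝ u D (Φ (x', s))‖)
            volume ε t := by
          apply ContinuousOn.intervalIntegrable
          rw [huIcc]; exact hnc.mono hIcc
        have hftc : ∫ s in ε..t, (fderiv ℝ u (Φ (x', s))) ed
            = u (Φ (x', t)) - u (Φ (x', ε)) :=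
          intervalIntegral.integral_eq_sub_of_hasDerivAt hder hint
        have hpt : ∀ s ∈ Icc ε t,
            ‖(fderiv ℝ u (Φ (x', s))) ed‖ ≤ ‖fderivWithin ℝ u D (Φ (x', s))‖ := by
          intro s hs
          have h := (fderiv ℝ u (Φ (x', s))).le_opNorm ed
          rw [hed_norm, mul_one] at h
          rw [fderivWithin_of_isOpen hD (hyD s (hIcc hs))]
          exact h
        have hbd : |u (Φ (x', t)) - u (Φ (x', ε))|
            ≤ ∫ s in ε..t, ‖fderivWithin ℝ u D (Φ (x', s))‖ := by
          rw [← hftc, ← Real.norm_eq_abs]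
          calc ‖∫ s in ε..t, (fderiv ℝ u (Φ (x', s))) ed‖
              ≤ ∫ s in ε..t, ‖(fderiv ℝ u (Φ (x', s))) ed‖ :=
                intervalIntegral.norm_integral_le_integral_norm hεt
            _ ≤ ∫ s in ε..t, ‖fderivWithin ℝ u D (Φ (x', s))‖ :=
                intervalIntegral.integral_mono_on hεt hint.norm hint2 hpt
        have hofReal : ENNReal.ofReal |u (Φ (x', t)) - u (Φ (x', ε))| ≤ L := by
          have hio : IntegrableOn (fun s : ℝ => ‖fderivWithin ℝ u D (Φ (x', s))‖)
              (Ioc ε t) volume := (intervalIntegrable_iff_integrableOn_Ioc_of_le hεt).1 hint2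
          calc ENNReal.ofReal |u (Φ (x', t)) - u (Φ (x', ε))|
              ≤ ENNReal.ofReal (∫ s in ε..t, ‖fderivWithin ℝ u D (Φ (x', s))‖) :=
                ENNReal.ofReal_le_ofReal hbd
            _ = ENNReal.ofReal (∫ s in Ioc ε t, ‖fderivWithin ℝ u D (Φ (x', s))‖) := by
                rw [intervalIntegral.integral_of_le hεt]
            _ = ∫⁻ s in Ioc ε t, ENNReal.ofReal ‖fderivWithin ℝ u D (Φ (x', s))‖ :=
                ofReal_integral_eq_lintegral_ofReal hio (ae_of_all _ fun s => norm_nonneg _)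
            _ ≤ L := lintegral_mono_set fun s hs =>
                ⟨lt_trans hε.1 hs.1, le_trans hs.2 ht.2⟩
        have e1 : |u (Φ (x', 0))| - |u (Φ (x', t))| ≤ |u (Φ (x', 0)) - u (Φ (x', t))| :=
          abs_sub_abs_le_abs_sub _ _
        have e2 : |u (Φ (x', 0)) - u (Φ (x', t))|
            ≤ |u (Φ (x', 0)) - u (Φ (x', ε))| + |u (Φ (x', ε)) - u (Φ (x', t))| :=
          abs_sub_le _ _ _
        have e3 : |u (Φ (x', 0)) - u (Φ (x', ε))| = |u (Φ (x', ε)) - u (Φ (x', 0))| :=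
          abs_sub_comm _ _
        have e4 : |u (Φ (x', ε)) - u (Φ (x', t))| = |u (Φ (x', t)) - u (Φ (x', ε))| :=
          abs_sub_comm _ _
        calc ENNReal.ofReal |u (Φ (x', 0))|
            ≤ ENNReal.ofReal (|u (Φ (x', t))| + (|u (Φ (x', ε)) - u (Φ (x', 0))|
                + |u (Φ (x', t)) - u (Φ (x', ε))|)) :=
              ENNReal.ofReal_le_ofReal (by linarith)
          _ = ENNReal.ofReal |u (Φ (x', t))| + (ENNReal.ofReal |u (Φ (x', ε)) - u (Φ (x', 0))|
                + ENNReal.ofReal |u (Φ (x', t)) - u (Φ (x', ε))|) := by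
              rw [ENNReal.ofReal_add (abs_nonneg _) (by positivity),
                ENNReal.ofReal_add (abs_nonneg _) (abs_nonneg _)]
          _ ≤ ENNReal.ofReal |u (Φ (x', t))| + (ENNReal.ofReal |u (Φ (x', ε)) - u (Φ (x', 0))|
                + L) := by gcongr
          _ = ENNReal.ofReal |u (Φ (x', t))| + ENNReal.ofReal |u (Φ (x', ε)) - u (Φ (x', 0))|
                + L := by rw [add_assoc]
      have h1 : Filter.Tendsto (fun ε : ℝ => u (Φ (x', ε))) (nhdsWithin 0 (Ioi 0))
          (nhds (u (Φ (x', 0)))) := by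
        have hyt : Filter.Tendsto (fun ε : ℝ => Φ (x', ε)) (nhdsWithin 0 (Ioi 0))
            (nhdsWithin (Φ (x', 0)) (closure D)) := by
          rw [tendsto_nhdsWithin_iff]
          constructor
          · exact (hy_cont.tendsto 0).mono_left nhdsWithin_le_nhds
          · filter_upwards [Ioo_mem_nhdsGT hT] with s hs
              using subset_closure (hyD s ⟨hs.1, hs.2.le⟩)
        exact Filter.Tendsto.comp (huc.continuousWithinAt hy_cl) hyt
      have h2 : Filter.Tendsto (fun ε : ℝ => ENNReal.ofReal |u (Φ (x', ε)) - u (Φ (x', 0))|)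
          (nhdsWithin 0 (Ioi 0)) (nhds 0) := by
        have h3 : Filter.Tendsto (fun ε : ℝ => |u (Φ (x', ε)) - u (Φ (x', 0))|)
            (nhdsWithin 0 (Ioi 0)) (nhds |u (Φ (x', 0)) - u (Φ (x', 0))|) :=
          (h1.sub tendsto_const_nhds).abs
        rw [sub_self, abs_zero] at h3
        simpa using ENNReal.tendsto_ofReal h3
      have hlim : Filter.Tendsto (fun ε : ℝ => ENNReal.ofReal |u (Φ (x', t))|
          + ENNReal.ofReal |u (Φ (x', ε)) - u (Φ (x', 0))| + L)
          (nhdsWithin 0 (Ioi 0)) (nhds (ENNReal.ofReal |u (Φ (x', t))| + 0 + L)) :=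
        (tendsto_const_nhds.add h2).add tendsto_const_nhds
      have hev : ∀ᶠ ε in nhdsWithin (0 : ℝ) (Ioi 0), ENNReal.ofReal |u (Φ (x', 0))|
          ≤ ENNReal.ofReal |u (Φ (x', t))|
            + ENNReal.ofReal |u (Φ (x', ε)) - u (Φ (x', 0))| + L := by
        filter_upwards [Ioo_mem_nhdsGT ht.1] with ε hε using hstep ε hε
      have hle := ge_of_tendsto hlim hev
      simpa using hle
    have key2 : ∀ t ∈ Ioc (0 : ℝ) T, ENNReal.ofReal (|u (Φ (x', 0))| ^ p)
        ≤ 2 ^ p * (ENNReal.ofReal (|u (Φ (x', t))| ^ p) + L ^ p) := by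
      intro t ht
      rw [← ENNReal.ofReal_rpow_of_nonneg (abs_nonneg _) hp0,
        ← ENNReal.ofReal_rpow_of_nonneg (abs_nonneg _) hp0]
      calc ENNReal.ofReal |u (Φ (x', 0))| ^ p
          ≤ (ENNReal.ofReal |u (Φ (x', t))| + L) ^ p := ENNReal.rpow_le_rpow (key t ht) hp0
        _ ≤ 2 ^ p * (ENNReal.ofReal |u (Φ (x', t))| ^ p + L ^ p) :=
            add_rpow_le_two_rpow_mul _ _ hp0
    have hfmeas : AEMeasurable (fun s : ℝ => ENNReal.ofReal ‖fderivWithin ℝ u D (Φ (x', s))‖)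
        ((volume : Measure ℝ).restrict (Ioc 0 T)) :=
      (ENNReal.continuous_ofReal.comp_continuousOn hnc).aemeasurable measurableSet_Ioc
    have hLp : L ^ p ≤ ENNReal.ofReal T ^ (p - 1)
        * ∫⁻ s in Ioc (0 : ℝ) T, ENNReal.ofReal ‖fderivWithin ℝ u D (Φ (x', s))‖ ^ p := by
      rcases eq_or_lt_of_le hp with heq | hlt
      · rw [← heq]
        simp [hL_def]
      · have hpne : p ≠ 0 := by linarith
        have hpq : p.HolderConjugate (p / (p - 1)) := Real.HolderConjugate.conjExponent hlt
        have hH := ENNReal.lintegral_mul_le_Lp_mul_Lq ((volume : Measure ℝ).restrict (Ioc 0 T))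
          hpq hfmeas aemeasurable_const
          (f := fun s => ENNReal.ofReal ‖fderivWithin ℝ u D (Φ (x', s))‖)
          (g := fun _ => (1 : ℝ≥0∞))
        simp only [Pi.mul_apply, mul_one, ENNReal.one_rpow] at hH
        rw [lintegral_one, Measure.restrict_apply_univ, Real.volume_Ioc, sub_zero] at hH
        have h6 : L ^ p ≤ ((∫⁻ s in Ioc (0 : ℝ) T,
            ENNReal.ofReal ‖fderivWithin ℝ u D (Φ (x', s))‖ ^ p) ^ (1 / p)
              * ENNReal.ofReal T ^ (1 / (p / (p - 1)))) ^ p :=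
          ENNReal.rpow_le_rpow hH hp0
        rw [ENNReal.mul_rpow_of_nonneg _ _ hp0, ← ENNReal.rpow_mul, ← ENNReal.rpow_mul,
          one_div_mul_cancel hpne, ENNReal.rpow_one] at h6
        have hexp : 1 / (p / (p - 1)) * p = p - 1 := by
          field_simp
        rw [hexp] at h6
        calc L ^ p ≤ _ := h6
          _ = ENNReal.ofReal T ^ (p - 1) * ∫⁻ s in Ioc (0 : ℝ) T,
              ENNReal.ofReal ‖fderivWithin ℝ u D (Φ (x', s))‖ ^ p := mul_comm _ _
    have haemeas_u : AEMeasurable (fun t : ℝ => ENNReal.ofReal (|u (Φ (x', t))| ^ p))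
        ((volume : Measure ℝ).restrict (Ioc 0 T)) := by
      refine ContinuousOn.aemeasurable ?_ measurableSet_Ioc
      apply ENNReal.continuous_ofReal.comp_continuousOn
      apply ContinuousOn.rpow_const
      · exact (hucD.comp hy_cont.continuousOn hyD).abs
      · exact fun s hs => Or.inr hp0
    have havg : ENNReal.ofReal T * ENNReal.ofReal (|u (Φ (x', 0))| ^ p)
        ≤ 2 ^ p * (∫⁻ t in Ioc (0 : ℝ) T, ENNReal.ofReal (|u (Φ (x', t))| ^ p))
          + 2 ^ p * (ENNReal.ofReal T * L ^ p) := by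
      have h0 : ∫⁻ _ in Ioc (0 : ℝ) T, ENNReal.ofReal (|u (Φ (x', 0))| ^ p) ∂volume
          = ENNReal.ofReal (|u (Φ (x', 0))| ^ p) * ENNReal.ofReal T := by
        rw [setLIntegral_const, Real.volume_Ioc, sub_zero]
      have h1 : ∫⁻ _ in Ioc (0 : ℝ) T, ENNReal.ofReal (|u (Φ (x', 0))| ^ p) ∂volume
          ≤ ∫⁻ t in Ioc (0 : ℝ) T, 2 ^ p * (ENNReal.ofReal (|u (Φ (x', t))| ^ p) + L ^ p)
            ∂volume := by
        apply lintegral_mono_ae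
        filter_upwards [ae_restrict_mem measurableSet_Ioc] with t ht using key2 t ht
      have h2 : ∫⁻ t in Ioc (0 : ℝ) T, 2 ^ p * (ENNReal.ofReal (|u (Φ (x', t))| ^ p) + L ^ p)
            ∂volume
          = 2 ^ p * ((∫⁻ t in Ioc (0 : ℝ) T, ENNReal.ofReal (|u (Φ (x', t))| ^ p))
            + L ^ p * ENNReal.ofReal T) := by
        rw [lintegral_const_mul' _ _ h2top, lintegral_add_left' haemeas_u,
          setLIntegral_const, Real.volume_Ioc, sub_zero]
      rw [h0, h2] at h1
      calc ENNReal.ofReal T * ENNReal.ofReal (|u (Φ (x', 0))| ^ p)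
          = ENNReal.ofReal (|u (Φ (x', 0))| ^ p) * ENNReal.ofReal T := mul_comm _ _
        _ ≤ 2 ^ p * ((∫⁻ t in Ioc (0 : ℝ) T, ENNReal.ofReal (|u (Φ (x', t))| ^ p))
            + L ^ p * ENNReal.ofReal T) := h1
        _ = 2 ^ p * (∫⁻ t in Ioc (0 : ℝ) T, ENNReal.ofReal (|u (Φ (x', t))| ^ p))
            + 2 ^ p * (ENNReal.ofReal T * L ^ p) := by ring
    have hJ1 : ∫⁻ t in Ioc (0 : ℝ) T, ENNReal.ofReal (|u (Φ (x', t))| ^ p)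
        ≤ ∫⁻ t in Ioc (0 : ℝ) T, F (Φ (x', t)) := by
      apply lintegral_mono
      intro t
      apply ENNReal.ofReal_le_ofReal
      exact le_add_of_nonneg_right (Real.rpow_nonneg (norm_nonneg _) p)
    have hJ2 : ∫⁻ s in Ioc (0 : ℝ) T, ENNReal.ofReal ‖fderivWithin ℝ u D (Φ (x', s))‖ ^ p
        ≤ ∫⁻ t in Ioc (0 : ℝ) T, F (Φ (x', t)) := by
      refine lintegral_mono fun s => ?_
      calc ENNReal.ofReal ‖fderivWithin ℝ u D (Φ (x', s))‖ ^ p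
          = ENNReal.ofReal (‖fderivWithin ℝ u D (Φ (x', s))‖ ^ p) :=
            ENNReal.ofReal_rpow_of_nonneg (norm_nonneg _) hp0
        _ ≤ ENNReal.ofReal (|u (Φ (x', s))| ^ p + ‖fderivWithin ℝ u D (Φ (x', s))‖ ^ p) :=
            ENNReal.ofReal_le_ofReal
              (le_add_of_nonneg_left (Real.rpow_nonneg (abs_nonneg _) p))
    set J := ∫⁻ t in Ioc (0 : ℝ) T, F (Φ (x', t)) with hJ_def
    have hTpow : ENNReal.ofReal T * ENNReal.ofReal T ^ (p - 1) = ENNReal.ofReal T ^ p := by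
      have hp1 : ENNReal.ofReal T ^ p = ENNReal.ofReal T ^ (1 + (p - 1)) := by ring_nf
      rw [hp1, ENNReal.rpow_add _ _ hTne0 ENNReal.ofReal_ne_top, ENNReal.rpow_one]
    have hfin : ENNReal.ofReal T * ENNReal.ofReal (|u (Φ (x', 0))| ^ p)
        ≤ 2 ^ p * (1 + ENNReal.ofReal T ^ p) * J := by
      calc ENNReal.ofReal T * ENNReal.ofReal (|u (Φ (x', 0))| ^ p)
          ≤ 2 ^ p * (∫⁻ t in Ioc (0 : ℝ) T, ENNReal.ofReal (|u (Φ (x', t))| ^ p))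
            + 2 ^ p * (ENNReal.ofReal T * L ^ p) := havg
        _ ≤ 2 ^ p * J + 2 ^ p * (ENNReal.ofReal T * (ENNReal.ofReal T ^ (p - 1)
            * ∫⁻ s in Ioc (0 : ℝ) T, ENNReal.ofReal ‖fderivWithin ℝ u D (Φ (x', s))‖ ^ p)) := by
            gcongr
        _ ≤ 2 ^ p * J + 2 ^ p * (ENNReal.ofReal T * (ENNReal.ofReal T ^ (p - 1) * J)) := by
            gcongr
        _ = 2 ^ p * (1 + ENNReal.ofReal T ^ p) * J := by
            rw [← mul_assoc (ENNReal.ofReal T), hTpow]; ring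
    have hmul := mul_le_mul_right hfin (ENNReal.ofReal T)⁻¹
    rw [← mul_assoc, ENNReal.inv_mul_cancel hTne0 ENNReal.ofReal_ne_top, one_mul] at hmul
    calc ENNReal.ofReal (|u (Φ (x', 0))| ^ p)
        ≤ (ENNReal.ofReal T)⁻¹ * (2 ^ p * (1 + ENNReal.ofReal T ^ p) * J) := hmul
      _ = c1 * J := by rw [hc1_def]; ring

  -- assembling
  calc ∫⁻ x in frontier D ∩ ball a T, ENNReal.ofReal (|u x| ^ p) ∂μH[(d : ℝ)]
      ≤ ∫⁻ x in G '' B, ENNReal.ofReal (|u x| ^ p) ∂μH[(d : ℝ)] := lintegral_mono_set hS_sub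
    _ ≤ ∫⁻ x, ENNReal.ofReal (|u x| ^ p)
          ∂(((cG : ℝ≥0∞) ^ (d : ℝ)) • ((volume.restrict B).map G)) :=
        lintegral_mono' hmeas_comp le_rfl
    _ = (cG : ℝ≥0∞) ^ (d : ℝ) * ∫⁻ x, ENNReal.ofReal (|u x| ^ p)
          ∂((volume.restrict B).map G) := lintegral_smul_measure _ _
    _ ≤ (cG : ℝ≥0∞) ^ (d : ℝ) * ∫⁻ z in B, ENNReal.ofReal (|u (G z)| ^ p) ∂volume :=
        mul_le_mul_right (lintegral_map_le _ G) _
    _ = (cG : ℝ≥0∞) ^ (d : ℝ) * ∫⁻ x' in A, ENNReal.ofReal (|u (Φ (x', 0))| ^ p) ∂volume := by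
        congr 1
        have h := ((EuclideanSpace.volume_preserving_symm_measurableEquiv_toLp (Fin d)).symm
            ((MeasurableEquiv.toLp 2 (Fin d → ℝ)).symm)).setLIntegral_comp_emb
          (MeasurableEquiv.measurableEmbedding _)
          (fun x' => ENNReal.ofReal (|u (Φ (x', 0))| ^ p)) B
        rw [hB_def, Set.image_preimage_eq _ (MeasurableEquiv.surjective _)] at h
        exact h
    _ ≤ (cG : ℝ≥0∞) ^ (d : ℝ) * ∫⁻ x' in A,
          c1 * ∫⁻ t in Ioc (0 : ℝ) T, F (Φ (x', t)) ∂volume ∂volume := by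
        apply mul_le_mul_right
        apply lintegral_mono_ae
        filter_upwards [ae_restrict_mem hA_open.measurableSet] with x' hx' using core x' hx'
    _ = (cG : ℝ≥0∞) ^ (d : ℝ) * (c1 * ∫⁻ x' in A,
          ∫⁻ t in Ioc (0 : ℝ) T, F (Φ (x', t)) ∂volume ∂volume) := by
        rw [lintegral_const_mul' c1 _ hc1_ne_top]
    _ = (cG : ℝ≥0∞) ^ (d : ℝ) * (c1 *
          ∫⁻ q in A ×ˢ Ioc (0 : ℝ) T, F (Φ q) ∂(volume.prod volume)) := by
        congr 2
        have hae : AEMeasurable (fun q : EuclideanSpace ℝ (Fin d) × ℝ => F (Φ q))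
            (((volume : Measure (EuclideanSpace ℝ (Fin d))).restrict A).prod
              ((volume : Measure ℝ).restrict (Ioc 0 T))) := by
          rw [Measure.prod_restrict]
          refine ContinuousOn.aemeasurable ?_ (hA_open.measurableSet.prod measurableSet_Ioc)
          exact hF_cont.comp hΦ_cont.continuousOn fun q hq => (hin q.1 hq.1 q.2 hq.2).1
        rw [← Measure.prod_restrict, lintegral_prod _ hae]
    _ = (cG : ℝ≥0∞) ^ (d : ℝ) * (c1 *
          ∫⁻ x in Φ '' (A ×ˢ Ioc (0 : ℝ) T), F x ∂volume) := by
        rw [hΦ_mp.setLIntegral_comp_emb (MeasurableEquiv.measurableEmbedding _) F _]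
    _ ≤ (cG : ℝ≥0∞) ^ (d : ℝ) * (c1 * ∫⁻ x in D ∩ ball a r, F x ∂volume) := by
        apply mul_le_mul_right
        apply mul_le_mul_right
        apply lintegral_mono_set
        rintro x ⟨q, hq, rfl⟩
        exact hin q.1 hq.1 q.2 hq.2
    _ = (cG : ℝ≥0∞) ^ (d : ℝ) * c1 * ∫⁻ x in D ∩ ball a r, F x ∂volume := by
        rw [hc1_def]; ring

end
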